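/- Let A₀ be a fixed deterministic 3×3 real matrix and let B₁ = e₃b₁ᵀ, B₂ = e₃b₂ᵀ where b₁ and b₂ are independent random vectors in ℝ³ with finite expectations. For the block matrix A_L = [[A₀,0,0],[B₁,A₀,0],[0,B₂,A₀]], the expectation of every power satisfies 𝔼[A_L^k] = (𝔼[A_L])^k for all k ∈ ℕ. -/

import Mathlib

/-!
Under `Matrix.comp`, `A_L` is the lower bidiagonal `3 × 3` block matrix with constant diagonal
`A₀`, so its `k`-th power has `A₀ ^ k` on the diagonal, the blocks `∑ A₀^i B A₀^j` (linear in one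
`B_i`) below it, and the corner block `∑ A₀^i B₂ A₀^j B₁ A₀^l`. Expectation commutes with the
linear blocks, and with the bilinear corner because `B₁` and `B₂` are independent; hence
`𝔼[A_L ^ k]` is the same polynomial in `𝔼[B₁]`, `𝔼[B₂]` as `𝔼[A_L] ^ k`.
-/

open Matrix MeasureTheory ProbabilityTheory

/-- Entrywise expectation of a random matrix. -/
noncomputable def matrixExpect {Ω : Type*} [MeasurableSpace Ω] (μ : Measure Ω)
    {m n : Type*} [Fintype m] [Fintype n]
    (M : Ω → Matrix m n ℝ) : Matrix m n ℝ :=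
  Matrix.of fun i j => ∫ ω, M ω i j ∂μ

/-- The 9×9 random block matrix `A_L = [[A₀,0,0],[B₁,A₀,0],[0,B₂,A₀]]` with
`B_i = e₃ b_iᵀ`. -/
noncomputable def randBlockAL {Ω : Type*} (A0 : Matrix (Fin 3) (Fin 3) ℝ)
    (b1 b2 : Ω → Fin 3 → ℝ) (ω : Ω) :
    Matrix (Fin 3 × Fin 3) (Fin 3 × Fin 3) ℝ :=
  Matrix.of fun pa qb =>
    if pa.1 = qb.1 then A0 pa.2 qb.2
    else if pa.1 = 1 ∧ qb.1 = 0 then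
      (vecMulVec (fun a => if a = 2 then (1:ℝ) else 0) (b1 ω)) pa.2 qb.2
    else if pa.1 = 2 ∧ qb.1 = 1 then
      (vecMulVec (fun a => if a = 2 then (1:ℝ) else 0) (b2 ω)) pa.2 qb.2
    else 0

section BlockPowers

variable {R : Type*} [Ring R] (a : R)

/- Closed forms: `offDiagPow a x k = ∑_{i+j=k-1} a^i x a^j` and
`cornerPow a x y k = ∑_{i+j+l=k-2} a^i y a^j x a^l`. -/
def offDiagPow (x : R) : ℕ → R
  | 0 => 0
  | k + 1 => offDiagPow x k * a + a ^ k * x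

def cornerPow (x y : R) : ℕ → R
  | 0 => 0
  | k + 1 => cornerPow x y k * a + offDiagPow a y k * x

theorem pow_lowerBidiagonal (x y : R) (k : ℕ) :
    !![a, 0, 0; x, a, 0; 0, y, a] ^ k =
      !![a ^ k, 0, 0;
        offDiagPow a x k, a ^ k, 0;
        cornerPow a x y k, offDiagPow a y k, a ^ k] := by
  induction k with
  | zero => simp [one_fin_three, offDiagPow, cornerPow]
  | succ k ih =>
    rw [pow_succ, ih]
    ext i j
    fin_cases i <;> fin_cases j <;>
      simp [mul_apply, Fin.sum_univ_three, offDiagPow, cornerPow, pow_succ]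

end BlockPowers

theorem ProbabilityTheory.Indep.indepFun_apply {Ω n : Type*} {m₁ m₂ : MeasurableSpace Ω}
    [MeasurableSpace Ω] {μ : Measure Ω} {X Y : Ω → Matrix n n ℝ} (hind : Indep m₁ m₂ μ)
    (hX : ∀ i j, Measurable[m₁] (X · i j)) (hY : ∀ i j, Measurable[m₂] (Y · i j))
    (i j k l : n) : IndepFun (X · i j) (Y · k l) μ :=
  (IndepFun_iff_Indep _ _ _).2 <|
    indep_of_indep_of_le hind (hX i j).comap_le (hY k l).comap_le

section MeasurableEntries

variable {Ω n : Type*} [Fintype n] {m : MeasurableSpace Ω} {X : Ω → Matrix n n ℝ}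

theorem measurable_mul_const_apply (hX : ∀ i j, Measurable[m] (X · i j))
    (P : Matrix n n ℝ) (i j : n) : Measurable[m] fun ω => (X ω * P) i j := by
  simp only [mul_apply]
  exact Finset.measurable_sum _ fun l _ => (hX i l).mul_const _

theorem measurable_const_mul_apply (hX : ∀ i j, Measurable[m] (X · i j))
    (P : Matrix n n ℝ) (i j : n) : Measurable[m] fun ω => (P * X ω) i j := by
  simp only [mul_apply]
  exact Finset.measurable_sum _ fun l _ => (hX l j).const_mul _

theorem measurable_offDiagPow_apply [DecidableEq n] (a : Matrix n n ℝ)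
    (hX : ∀ i j, Measurable[m] (X · i j)) (k : ℕ) (i j : n) :
    Measurable[m] fun ω => offDiagPow a (X ω) k i j := by
  induction k generalizing i j with
  | zero => exact measurable_const
  | succ k ih =>
    exact (measurable_mul_const_apply ih a i j).add (measurable_const_mul_apply hX _ i j)

end MeasurableEntries

section MatrixExpect

variable {Ω n : Type*} [Fintype n] {X Y : Ω → Matrix n n ℝ}
  {m₁ m₂ : MeasurableSpace Ω} [MeasurableSpace Ω] {μ : Measure Ω}

theorem matrixExpect_const [IsProbabilityMeasure μ] (P : Matrix n n ℝ) :
    matrixExpect μ (fun _ => P) = P := by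
  ext i j
  simp [matrixExpect]

theorem matrixExpect_add (hX : ∀ i j, Integrable (X · i j) μ)
    (hY : ∀ i j, Integrable (Y · i j) μ) :
    matrixExpect μ (fun ω => X ω + Y ω) = matrixExpect μ X + matrixExpect μ Y := by
  ext i j
  exact integral_add (hX i j) (hY i j)

theorem integrable_mul_const_apply (hX : ∀ i j, Integrable (X · i j) μ) (P : Matrix n n ℝ)
    (i j : n) : Integrable (fun ω => (X ω * P) i j) μ := by
  simp only [mul_apply]
  exact integrable_finsetSum _ fun l _ => (hX i l).mul_const _

theorem integrable_const_mul_apply (hX : ∀ i j, Integrable (X · i j) μ) (P : Matrix n n ℝ)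
    (i j : n) : Integrable (fun ω => (P * X ω) i j) μ := by
  simp only [mul_apply]
  exact integrable_finsetSum _ fun l _ => (hX l j).const_mul _

theorem matrixExpect_mul_const (hX : ∀ i j, Integrable (X · i j) μ) (P : Matrix n n ℝ) :
    matrixExpect μ (fun ω => X ω * P) = matrixExpect μ X * P := by
  ext i j
  simp only [matrixExpect, of_apply, mul_apply]
  rw [integral_finsetSum _ fun l _ => (hX i l).mul_const _]
  simp only [integral_mul_const]

theorem matrixExpect_const_mul (hX : ∀ i j, Integrable (X · i j) μ) (P : Matrix n n ℝ) :
    matrixExpect μ (fun ω => P * X ω) = P * matrixExpect μ X := by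
  ext i j
  simp only [matrixExpect, of_apply, mul_apply]
  rw [integral_finsetSum _ fun l _ => (hX l j).const_mul _]
  simp only [integral_const_mul]

theorem integrable_mul_apply_of_indep (hind : Indep m₁ m₂ μ)
    (hXm : ∀ i j, Measurable[m₁] (X · i j)) (hYm : ∀ i j, Measurable[m₂] (Y · i j))
    (hX : ∀ i j, Integrable (X · i j) μ) (hY : ∀ i j, Integrable (Y · i j) μ) (i j : n) :
    Integrable (fun ω => (X ω * Y ω) i j) μ := by
  simp only [mul_apply]
  exact integrable_finsetSum _ fun l _ =>
    (hind.indepFun_apply hXm hYm i l l j).integrable_mul (hX i l) (hY l j)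

theorem matrixExpect_mul_of_indep (hind : Indep m₁ m₂ μ)
    (hXm : ∀ i j, Measurable[m₁] (X · i j)) (hYm : ∀ i j, Measurable[m₂] (Y · i j))
    (hX : ∀ i j, Integrable (X · i j) μ) (hY : ∀ i j, Integrable (Y · i j) μ) :
    matrixExpect μ (fun ω => X ω * Y ω) = matrixExpect μ X * matrixExpect μ Y := by
  ext i j
  have hindep l := hind.indepFun_apply hXm hYm i l l j
  have hprod l : Integrable (fun ω => X ω i l * Y ω l j) μ :=
    (hindep l).integrable_mul (hX i l) (hY l j)
  simp only [matrixExpect, of_apply, mul_apply]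
  rw [integral_finsetSum _ fun l _ => hprod l]
  exact Finset.sum_congr rfl fun l _ =>
    (hindep l).integral_mul_eq_mul_integral (hX i l).1 (hY l j).1

theorem matrixExpect_comp {I J : Type*} [Fintype I] [Fintype J]
    (M : Ω → Matrix I I (Matrix J J ℝ)) :
    matrixExpect μ (fun ω => comp I I J J ℝ (M ω)) =
      comp I I J J ℝ (of fun I' J' => matrixExpect μ (M · I' J')) :=
  rfl

theorem matrixExpect_comp_lowerTriangular [IsProbabilityMeasure μ] (P : Matrix n n ℝ)
    (X Y Z : Ω → Matrix n n ℝ) :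
    matrixExpect μ (fun ω => comp _ _ _ _ ℝ !![P, 0, 0; X ω, P, 0; Y ω, Z ω, P]) =
      comp _ _ _ _ ℝ
        !![P, 0, 0; matrixExpect μ X, P, 0; matrixExpect μ Y, matrixExpect μ Z, P] := by
  rw [matrixExpect_comp, eta_fin_three (of _)]
  simp [matrixExpect_const]

end MatrixExpect

section RandomBlockPowers

variable {Ω n : Type*} [Fintype n] [DecidableEq n] {X Y : Ω → Matrix n n ℝ}
  {m₁ m₂ : MeasurableSpace Ω} [MeasurableSpace Ω] {μ : Measure Ω} (a : Matrix n n ℝ)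

theorem integrable_offDiagPow_apply (hX : ∀ i j, Integrable (X · i j) μ) (k : ℕ) (i j : n) :
    Integrable (fun ω => offDiagPow a (X ω) k i j) μ := by
  induction k generalizing i j with
  | zero => exact integrable_zero _ _ _
  | succ k ih =>
    exact (integrable_mul_const_apply ih a i j).add (integrable_const_mul_apply hX _ i j)

theorem matrixExpect_offDiagPow (hX : ∀ i j, Integrable (X · i j) μ) (k : ℕ) :
    matrixExpect μ (fun ω => offDiagPow a (X ω) k) = offDiagPow a (matrixExpect μ X) k := by
  induction k with
  | zero => ext; simp [matrixExpect, offDiagPow]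
  | succ k ih =>
    have hD := integrable_offDiagPow_apply a hX k
    simp only [offDiagPow]
    rw [matrixExpect_add (integrable_mul_const_apply hD a) (integrable_const_mul_apply hX _),
      matrixExpect_mul_const hD, matrixExpect_const_mul hX, ih]

theorem integrable_cornerPow_apply (hind : Indep m₁ m₂ μ)
    (hXm : ∀ i j, Measurable[m₁] (X · i j)) (hYm : ∀ i j, Measurable[m₂] (Y · i j))
    (hX : ∀ i j, Integrable (X · i j) μ) (hY : ∀ i j, Integrable (Y · i j) μ) (k : ℕ) (i j : n) :
    Integrable (fun ω => cornerPow a (X ω) (Y ω) k i j) μ := by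
  induction k generalizing i j with
  | zero => exact integrable_zero _ _ _
  | succ k ih =>
    exact (integrable_mul_const_apply ih a i j).add <| integrable_mul_apply_of_indep hind.symm
      (measurable_offDiagPow_apply a hYm k) hXm (integrable_offDiagPow_apply a hY k) hX i j

theorem matrixExpect_cornerPow (hind : Indep m₁ m₂ μ)
    (hXm : ∀ i j, Measurable[m₁] (X · i j)) (hYm : ∀ i j, Measurable[m₂] (Y · i j))
    (hX : ∀ i j, Integrable (X · i j) μ) (hY : ∀ i j, Integrable (Y · i j) μ) (k : ℕ) :
    matrixExpect μ (fun ω => cornerPow a (X ω) (Y ω) k) =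
      cornerPow a (matrixExpect μ X) (matrixExpect μ Y) k := by
  induction k with
  | zero => ext; simp [matrixExpect, cornerPow]
  | succ k ih =>
    have hF := integrable_cornerPow_apply a hind hXm hYm hX hY k
    have hDm := measurable_offDiagPow_apply a hYm k
    have hD := integrable_offDiagPow_apply a hY k
    simp only [cornerPow]
    rw [matrixExpect_add (integrable_mul_const_apply hF a)
        (integrable_mul_apply_of_indep hind.symm hDm hXm hD hX),
      matrixExpect_mul_const hF, matrixExpect_mul_of_indep hind.symm hDm hXm hD hX, ih,
      matrixExpect_offDiagPow a hY]

end RandomBlockPowers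

theorem expect_pow_randBlockAL_general {Ω : Type*} [MeasurableSpace Ω]
    (μ : Measure Ω) [IsProbabilityMeasure μ]
    (A0 : Matrix (Fin 3) (Fin 3) ℝ) (b1 b2 : Ω → Fin 3 → ℝ)
    (hb1 : ∀ j, Integrable (fun ω => b1 ω j) μ)
    (hb2 : ∀ j, Integrable (fun ω => b2 ω j) μ)
    (hindep : IndepFun b1 b2 μ) :
    ∀ k : ℕ,
      matrixExpect μ (fun ω => (randBlockAL A0 b1 b2 ω) ^ k)
        = (matrixExpect μ (randBlockAL A0 b1 b2)) ^ k := by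
  let e : Fin 3 → ℝ := fun a => if a = 2 then 1 else 0
  let B₁ ω := vecMulVec e (b1 ω)
  let B₂ ω := vecMulVec e (b2 ω)
  have hblock ω :
      randBlockAL A0 b1 b2 ω = comp _ _ _ _ ℝ !![A0, 0, 0; B₁ ω, A0, 0; 0, B₂ ω, A0] := by
    ext ⟨I, i⟩ ⟨J, j⟩
    fin_cases I <;> fin_cases J <;> rfl
  have hind : Indep (.comap b1 inferInstance) (.comap b2 inferInstance) μ :=
    (IndepFun_iff_Indep _ _ _).1 hindep
  have hB₁m i j : Measurable[.comap b1 inferInstance] (B₁ · i j) :=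
    ((measurable_pi_apply j).comp (comap_measurable b1)).const_mul _
  have hB₂m i j : Measurable[.comap b2 inferInstance] (B₂ · i j) :=
    ((measurable_pi_apply j).comp (comap_measurable b2)).const_mul _
  have hB₁ i j : Integrable (B₁ · i j) μ := (hb1 j).const_mul _
  have hB₂ i j : Integrable (B₂ · i j) μ := (hb2 j).const_mul _
  have hpow k : matrixExpect μ (fun ω => randBlockAL A0 b1 b2 ω ^ k) =
      comp _ _ _ _ ℝ (!![A0, 0, 0; matrixExpect μ B₁, A0, 0; 0, matrixExpect μ B₂, A0] ^ k) := by
    simp only [hblock, ← compRingEquiv_apply, ← map_pow, pow_lowerBidiagonal]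
    simp only [compRingEquiv_apply]
    rw [matrixExpect_comp_lowerTriangular, matrixExpect_offDiagPow _ hB₁,
      matrixExpect_offDiagPow _ hB₂, matrixExpect_cornerPow _ hind hB₁m hB₂m hB₁ hB₂]
  intro k
  have hmean := hpow 1
  simp only [pow_one] at hmean
  rw [hpow, hmean, ← compRingEquiv_apply, ← compRingEquiv_apply, map_pow]

/-- For the block matrix `A_L = [[A₀,0,0],[B₁,A₀,0],[0,B₂,A₀]]` with `A₀`
deterministic and `b₁, b₂` independent integrable random vectors, the entrywise
expectation of every power satisfies `𝔼[A_L^k] = (𝔼[A_L])^k`. -/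
theorem expect_pow_randBlockAL {Ω : Type*} [MeasurableSpace Ω]
    (μ : Measure Ω) [IsProbabilityMeasure μ]
    (A0 : Matrix (Fin 3) (Fin 3) ℝ) (b1 b2 : Ω → Fin 3 → ℝ)
    (hb1 : ∀ j, Integrable (fun ω => b1 ω j) μ)
    (hb2 : ∀ j, Integrable (fun ω => b2 ω j) μ)
    (hindep : IndepFun b1 b2 μ)
    (hmeas1 : Measurable b1) (hmeas2 : Measurable b2)
    (hpowint : ∀ (k : ℕ) (i j : Fin 3 × Fin 3),
      Integrable (fun ω => ((randBlockAL A0 b1 b2 ω) ^ k) i j) μ) :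
    ∀ k : ℕ,
      matrixExpect μ (fun ω => (randBlockAL A0 b1 b2 ω) ^ k)
        = (matrixExpect μ (randBlockAL A0 b1 b2)) ^ k :=
  expect_pow_randBlockAL_general μ A0 b1 b2 hb1 hb2 hindep
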